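/- Let ε ∈ (0,1), a = 1+ε, μ > 0, δ > 0, β₀ > 0 with 0 < 2β₀^{1−ε} < δ(1−ε), and let β(t) = (δ(1−ε)/2 · (e^{−2t} − 1) + β₀^{1−ε})^{1/(1−ε)} on [0,T₀), where T₀ = ½ ln(δ(1−ε)/(δ(1−ε) − 2β₀^{1−ε})). Set M(ε) = sup_{s>0} s^{2−ε}/(1+s²) (a finite positive number). Assume μ is large enough that cos(2 arctan(r^a/(e^{at} μ))) ≥ 1/(1+ε) for all r ∈ [0,1] and t ≥ 0, and assume δ ≤ με/(M(ε)(μ²+1)). Then the function f(r,t) = 2 arctan(r/(e^t β(t))) + 2 arctan(r^a/(e^{at} μ)) is a subsolution of the drifted harmonic map heat equation on (0,1] × [0,T₀), i.e. f_t + r f_r ≤ f_rr + f_r/r − sin(2f)/(2r²) for all r ∈ (0,1] and t ∈ [0,T₀). -/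

import Mathlib

open Set Real

noncomputable section

/-- The blow-up time `T₀ = ½ ln(δ(1−ε)/(δ(1−ε) − 2β₀^{1−ε}))`. -/
def blowupTime (ε δ β₀ : ℝ) : ℝ :=
  (1 / 2) * Real.log (δ * (1 - ε) / (δ * (1 - ε) - 2 * β₀ ^ (1 - ε)))

/-- The solution `β(t) = (δ(1−ε)/2 (e^{−2t} − 1) + β₀^{1−ε})^{1/(1−ε)}` of the ODE
`β' = −δ e^{−2t} β^ε`, `β(0) = β₀`. -/
def betaFun (ε δ β₀ : ℝ) (t : ℝ) : ℝ :=
  (δ * (1 - ε) / 2 * (Real.exp (-2 * t) - 1) + β₀ ^ (1 - ε)) ^ (1 / (1 - ε))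

/-- `M(ε) = sup_{s > 0} s^{2−ε}/(1+s²)`. -/
def Meps (ε : ℝ) : ℝ :=
  sSup {y : ℝ | ∃ s : ℝ, 0 < s ∧ y = s ^ (2 - ε) / (1 + s ^ 2)}

/-- The barrier `f(r,t) = 2 arctan(r/(e^t β(t))) + 2 arctan(r^{1+ε}/(e^{(1+ε)t} μ))`. -/
def barrier (ε δ β₀ μ : ℝ) (r t : ℝ) : ℝ :=
  2 * Real.arctan (r / (Real.exp t * betaFun ε δ β₀ t))
    + 2 * Real.arctan (r ^ (1 + ε) / (Real.exp ((1 + ε) * t) * μ))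

/-!
Write `φ₁ = 2 arctan s` with `s = r/(eᵗβ)` and `φ₂ = 2 arctan q` with `q = r^{1+ε}/(e^{(1+ε)t}μ)`.
Each `φ = 2 arctan(r^k/c)` is a degree-`k` harmonic map, `r²(φ_rr + φ_r/r) = k² sin(2φ)/2`, and
`2 arctan(r^k/g(t))` has drift `φ_t + rφ_r = (k − g'/g) sin φ`. Hence the drift of `f = φ₁ + φ₂`
is only the term `δe^{−2t}β^{ε−1} sin φ₁` produced by `β' = −δe^{−2t}β^ε`, while
`r²(f_rr + f_r/r) − sin(2f)/2 = sin φ₂ ((1+ε)² cos φ₂ − cos(2φ₁ + φ₂)) ≥ ε sin φ₂`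
because `cos φ₂ ≥ 1/(1+ε)`. After rescaling, `r²` times the drift equals
`2δμq s^{2−ε}/(1+s²) ≤ 2δμM(ε)q`, and the bound on `δ` together with `qμ ≤ 1` makes this at most
`2εq/(1+q²) = ε sin φ₂`.
-/

open Filter Topology

theorem sin_two_mul_arctan (x : ℝ) : sin (2 * arctan x) = 2 * x / (1 + x ^ 2) := by
  have h : 0 < 1 + x ^ 2 := by positivity
  rw [sin_two_mul, sin_arctan, cos_arctan]
  field_simp
  rw [sq_sqrt h.le]

section Profile

variable {k c x : ℝ}

theorem hasDerivAt_two_mul_arctan_rpow_div (hx : 0 < x) :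
    HasDerivAt (fun r => 2 * arctan (r ^ k / c)) (k * sin (2 * arctan (x ^ k / c)) / x) x := by
  refine (((hasDerivAt_rpow_const (p := k) (Or.inl hx.ne')).div_const c).arctan.const_mul 2
    ).congr_deriv ?_
  rw [sin_two_mul_arctan, rpow_sub_one hx.ne']
  field_simp

theorem hasDerivAt_mul_sin_two_mul_arctan_rpow_div_div (hx : 0 < x) :
    HasDerivAt (fun r => k * sin (2 * arctan (r ^ k / c)) / r)
      ((k ^ 2 * sin (2 * (2 * arctan (x ^ k / c))) / 2 - k * sin (2 * arctan (x ^ k / c)))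
        / x ^ 2) x := by
  have hφ := hasDerivAt_two_mul_arctan_rpow_div (k := k) (c := c) hx
  refine ((hφ.sin.const_mul k).div (hasDerivAt_id x) hx.ne').congr_deriv ?_
  rw [sin_two_mul (2 * arctan (x ^ k / c))]
  simp only [id]
  field_simp

theorem radial_laplacian_two_mul_arctan_rpow_div_add {k₁ c₁ k₂ c₂ : ℝ} (hx : 0 < x) :
    let φ := fun r => 2 * arctan (r ^ k₁ / c₁) + 2 * arctan (r ^ k₂ / c₂)
    deriv (deriv φ) x + deriv φ x / x
      = (k₁ ^ 2 * sin (2 * (2 * arctan (x ^ k₁ / c₁)))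
          + k₂ ^ 2 * sin (2 * (2 * arctan (x ^ k₂ / c₂)))) / (2 * x ^ 2) := by
  intro φ
  have hφ : ∀ y, 0 < y → HasDerivAt φ (k₁ * sin (2 * arctan (y ^ k₁ / c₁)) / y
      + k₂ * sin (2 * arctan (y ^ k₂ / c₂)) / y) y := fun y hy =>
    (hasDerivAt_two_mul_arctan_rpow_div hy).add (hasDerivAt_two_mul_arctan_rpow_div hy)
  set ψ := fun y => k₁ * sin (2 * arctan (y ^ k₁ / c₁)) / y
      + k₂ * sin (2 * arctan (y ^ k₂ / c₂)) / y
  have hderiv : deriv φ =ᶠ[𝓝 x] ψ := by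
    filter_upwards [Ioi_mem_nhds hx] with y hy using (hφ y hy).deriv
  have hψ : HasDerivAt ψ _ x := (hasDerivAt_mul_sin_two_mul_arctan_rpow_div_div hx).add
    (hasDerivAt_mul_sin_two_mul_arctan_rpow_div_div hx)
  rw [hderiv.deriv_eq, (hφ x hx).deriv, hψ.deriv]
  field_simp
  ring

end Profile

theorem hasDerivAt_two_mul_arctan_const_div {g : ℝ → ℝ} {g' y t : ℝ} (hg : HasDerivAt g g' t)
    (hg0 : g t ≠ 0) :
    HasDerivAt (fun τ => 2 * arctan (y / g τ)) (-(g' / g t) * sin (2 * arctan (y / g t))) t := by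
  refine (((hasDerivAt_const t y).div hg hg0).arctan.const_mul 2).congr_deriv ?_
  rw [sin_two_mul_arctan]
  simp only [Pi.div_apply]
  field_simp
  ring

theorem two_mul_sub_one_mul_sin_le {a x y : ℝ} (ha : 0 < a) (hy : 0 ≤ sin y)
    (hcos : 1 / a ≤ cos y) :
    2 * (a - 1) * sin y ≤ sin (2 * x) + a ^ 2 * sin (2 * y) - sin (2 * (x + y)) := by
  have hid : sin (2 * x) + a ^ 2 * sin (2 * y) - sin (2 * (x + y))
      = 2 * sin y * (a ^ 2 * cos y - cos (2 * x + y)) := by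
    conv_lhs =>
      rw [show 2 * x = (2 * x + y) - y by ring, show 2 * (x + y) = (2 * x + y) + y by ring]
    rw [sin_sub (2 * x + y) y, sin_add (2 * x + y) y, sin_two_mul y]
    ring
  have ha2 : a ≤ a ^ 2 * cos y := by
    rw [div_le_iff₀ ha] at hcos
    nlinarith
  rw [hid]
  nlinarith [cos_le_one (2 * x + y)]

def betaBase (ε δ β₀ t : ℝ) : ℝ :=
  δ * (1 - ε) / 2 * (exp (-2 * t) - 1) + β₀ ^ (1 - ε)

section Beta

variable {ε δ β₀ t : ℝ}

theorem betaBase_pos (hβ₀ : 0 < β₀) (ht : 0 ≤ t) (htT : t < blowupTime ε δ β₀) :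
    0 < betaBase ε δ β₀ t := by
  have hK : 0 < β₀ ^ (1 - ε) := rpow_pos_of_pos hβ₀ _
  have he : exp (-2 * t) * exp (2 * t) = 1 := by rw [← exp_add]; simp
  have he1 : exp (-2 * t) ≤ 1 := exp_le_one_iff.mpr (by linarith)
  have he0 := exp_pos (-2 * t)
  unfold betaBase
  rcases le_or_gt (δ * (1 - ε)) (2 * β₀ ^ (1 - ε)) with hA | hA
  · nlinarith
  · -- only in this case does the base vanish in finite time, namely at `T₀`
    have hlog : 2 * t < log (δ * (1 - ε) / (δ * (1 - ε) - 2 * β₀ ^ (1 - ε))) := by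
      unfold blowupTime at htT; linarith
    rw [lt_log_iff_exp_lt (by apply div_pos <;> linarith), lt_div_iff₀ (by linarith)] at hlog
    nlinarith [exp_pos (2 * t)]

theorem betaFun_pos (hB : 0 < betaBase ε δ β₀ t) : 0 < betaFun ε δ β₀ t := rpow_pos_of_pos hB _

theorem betaFun_rpow (hB : 0 < betaBase ε δ β₀ t) (hε : ε ≠ 1) :
    betaFun ε δ β₀ t ^ (1 - ε) = betaBase ε δ β₀ t := by
  change (betaBase ε δ β₀ t ^ (1 / (1 - ε))) ^ (1 - ε) = _
  rw [← rpow_mul hB.le, one_div_mul_cancel (sub_ne_zero.mpr hε.symm), rpow_one]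

theorem hasDerivAt_betaFun (hB : 0 < betaBase ε δ β₀ t) (hε : ε ≠ 1) :
    HasDerivAt (betaFun ε δ β₀)
      (-(δ * exp (-2 * t) * betaFun ε δ β₀ t / betaBase ε δ β₀ t)) t := by
  have hbase : HasDerivAt (betaBase ε δ β₀) (δ * (1 - ε) / 2 * (exp (-2 * t) * -2)) t :=
    ((((hasDerivAt_id t).const_mul (-2)).exp.sub_const 1).const_mul _).add_const _
      |>.congr_deriv (by simp)
  refine ((hasDerivAt_rpow_const (p := 1 / (1 - ε)) (Or.inl hB.ne')).comp t hbase).congr_deriv ?_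
  have h1ε : 1 - ε ≠ 0 := sub_ne_zero.mpr hε.symm
  rw [betaFun, ← betaBase, rpow_sub_one hB.ne']
  field_simp

end Beta

theorem exp_div_rpow_mul_sq_eq {ε r t β μ : ℝ} (hr : 0 < r) (hβ : 0 < β) (hμ : μ ≠ 0) :
    exp (-2 * t) / β ^ (1 - ε) * (r / (exp t * β)) * r ^ 2
      = μ * (r ^ (1 + ε) / (exp ((1 + ε) * t) * μ)) * (r / (exp t * β)) ^ (2 - ε) := by
  have hr3 : r ^ (2 - ε) = r ^ 3 / r ^ (1 + ε) := by
    rw [eq_div_iff (rpow_pos_of_pos hr _).ne', ← rpow_add hr, ← rpow_natCast]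
    norm_num
  have hβ3 : β ^ (2 - ε) = β ^ (1 - ε) * β := by
    rw [← rpow_add_one hβ.ne']; ring_nf
  have he3 : exp t ^ (2 - ε) = exp t ^ 3 / exp ((1 + ε) * t) := by
    rw [← exp_mul, eq_div_iff (exp_pos _).ne', ← exp_add, ← exp_nat_mul]
    ring_nf
  have he2 : exp (-2 * t) = 1 / exp t ^ 2 := by
    rw [← exp_nat_mul, one_div, ← exp_neg]; push_cast; ring_nf
  rw [div_rpow hr.le (by positivity), mul_rpow (exp_pos t).le hβ.le, hr3, hβ3, he3, he2]
  have := exp_pos t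
  have := exp_pos ((1 + ε) * t)
  have := rpow_pos_of_pos hr (1 + ε)
  have := rpow_pos_of_pos hβ (1 - ε)
  field_simp

section Meps

variable {ε : ℝ}

theorem rpow_two_sub_le_one_add_sq {s : ℝ} (h0 : 0 ≤ ε) (h2 : ε ≤ 2) (hs : 0 ≤ s) :
    s ^ (2 - ε) ≤ 1 + s ^ 2 := by
  rcases le_total s 1 with h | h
  · nlinarith [rpow_le_one hs h (by linarith : 0 ≤ 2 - ε)]
  · have := rpow_le_rpow_of_exponent_le h (by linarith : 2 - ε ≤ 2)
    rw [rpow_two] at this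
    linarith

theorem bddAbove_Meps (h0 : 0 ≤ ε) (h2 : ε ≤ 2) :
    BddAbove {y : ℝ | ∃ s : ℝ, 0 < s ∧ y = s ^ (2 - ε) / (1 + s ^ 2)} := by
  refine ⟨1, ?_⟩
  rintro y ⟨s, hs, rfl⟩
  rw [div_le_one (by positivity)]
  exact rpow_two_sub_le_one_add_sq h0 h2 hs.le

theorem le_Meps {s : ℝ} (h0 : 0 ≤ ε) (h2 : ε ≤ 2) (hs : 0 < s) :
    s ^ (2 - ε) / (1 + s ^ 2) ≤ Meps ε :=
  le_csSup (bddAbove_Meps h0 h2) ⟨s, hs, rfl⟩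

theorem Meps_pos (h0 : 0 ≤ ε) (h2 : ε ≤ 2) : 0 < Meps ε := by
  have := le_Meps h0 h2 one_pos
  norm_num at this
  linarith

end Meps

theorem mul_le_div_one_add_sq_of_le_div {ε μ δ M q X : ℝ} (hε : 0 ≤ ε) (hμ : 0 < μ) (hM : 0 < M)
    (hq : 0 ≤ q) (hqμ : q * μ ≤ 1) (hX0 : 0 ≤ X) (hXM : X ≤ M)
    (hδ : δ ≤ μ * ε / (M * (μ ^ 2 + 1))) :
    δ * μ * q * X ≤ ε * q / (1 + q ^ 2) := by
  have hc : 0 ≤ μ * ε / (M * (μ ^ 2 + 1)) := by positivity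
  calc δ * μ * q * X ≤ μ * ε / (M * (μ ^ 2 + 1)) * μ * q * X := by gcongr
    _ ≤ μ * ε / (M * (μ ^ 2 + 1)) * μ * q * M := by gcongr
    _ = ε * q * μ ^ 2 / (μ ^ 2 + 1) := by field_simp
    _ ≤ ε * q / (1 + q ^ 2) := by
      rw [div_le_div_iff₀ (by positivity) (by positivity)]
      have : q ^ 2 * μ ^ 2 ≤ 1 := by
        rw [← mul_pow]; exact pow_le_one₀ (by positivity) hqμ
      nlinarith [mul_nonneg hε hq]

def bubbleAngle (ε δ β₀ r t : ℝ) : ℝ :=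
  2 * arctan (r / (exp t * betaFun ε δ β₀ t))

def correctionAngle (ε μ r t : ℝ) : ℝ :=
  2 * arctan (r ^ (1 + ε) / (exp ((1 + ε) * t) * μ))

section Barrier

variable {ε δ β₀ μ r t : ℝ}

theorem barrier_eq_add :
    barrier ε δ β₀ μ r t = bubbleAngle ε δ β₀ r t + correctionAngle ε μ r t :=
  rfl

theorem barrier_eq_add_rpow (t : ℝ) :
    (fun s => barrier ε δ β₀ μ s t)
      = fun s => 2 * arctan (s ^ (1 : ℝ) / (exp t * betaFun ε δ β₀ t))
        + 2 * arctan (s ^ (1 + ε) / (exp ((1 + ε) * t) * μ)) := by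
  simp only [barrier, rpow_one]

theorem barrier_drift_eq (hr : 0 < r) (hB : 0 < betaBase ε δ β₀ t) (hε : ε ≠ 1) (hμ : μ ≠ 0) :
    deriv (fun τ => barrier ε δ β₀ μ r τ) t + r * deriv (fun s => barrier ε δ β₀ μ s t) r
      = δ * exp (-2 * t) / betaBase ε δ β₀ t * sin (bubbleAngle ε δ β₀ r t) := by
  have hβ := betaFun_pos hB
  have hbubble : HasDerivAt (fun τ => 2 * arctan (r / (exp τ * betaFun ε δ β₀ τ))) _ t :=
    hasDerivAt_two_mul_arctan_const_div ((hasDerivAt_exp t).mul (hasDerivAt_betaFun hB hε))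
      (mul_pos (exp_pos t) hβ).ne'
  have hcorrection :
      HasDerivAt (fun τ => 2 * arctan (r ^ (1 + ε) / (exp ((1 + ε) * τ) * μ))) _ t :=
    hasDerivAt_two_mul_arctan_const_div
      (((hasDerivAt_id t).const_mul (1 + ε)).exp.mul_const μ) (mul_ne_zero (exp_pos _).ne' hμ)
  have htime : HasDerivAt (fun τ => barrier ε δ β₀ μ r τ) _ t := hbubble.add hcorrection
  have hspace : HasDerivAt (fun s => 2 * arctan (s ^ (1 : ℝ) / (exp t * betaFun ε δ β₀ t))
      + 2 * arctan (s ^ (1 + ε) / (exp ((1 + ε) * t) * μ))) _ r :=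
    (hasDerivAt_two_mul_arctan_rpow_div hr).add (hasDerivAt_two_mul_arctan_rpow_div hr)
  rw [htime.deriv, barrier_eq_add_rpow, hspace.deriv]
  simp only [rpow_one, bubbleAngle, id]
  field_simp
  ring

theorem barrier_radial_laplacian_eq (hr : 0 < r) :
    deriv (deriv fun s => barrier ε δ β₀ μ s t) r + deriv (fun s => barrier ε δ β₀ μ s t) r / r
      = (sin (2 * bubbleAngle ε δ β₀ r t) + (1 + ε) ^ 2 * sin (2 * correctionAngle ε μ r t))
          / (2 * r ^ 2) := by
  rw [barrier_eq_add_rpow, radial_laplacian_two_mul_arctan_rpow_div_add hr]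
  simp only [rpow_one, one_pow, one_mul, bubbleAngle, correctionAngle]

theorem barrier_drift_le (hε : ε ∈ Ioo 0 1) (hμ : 0 < μ) (hr : 0 < r) (hr1 : r ≤ 1) (ht : 0 ≤ t)
    (hB : 0 < betaBase ε δ β₀ t) (hδ : δ ≤ μ * ε / (Meps ε * (μ ^ 2 + 1))) :
    δ * exp (-2 * t) / betaBase ε δ β₀ t * sin (bubbleAngle ε δ β₀ r t)
      ≤ ε * sin (correctionAngle ε μ r t) / r ^ 2 := by
  obtain ⟨hε0, hε1⟩ := hε
  have hβ := betaFun_pos hB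
  set s := r / (exp t * betaFun ε δ β₀ t)
  set q := r ^ (1 + ε) / (exp ((1 + ε) * t) * μ)
  have hs : 0 < s := by positivity
  have hqμ : q * μ ≤ 1 := by
    rw [div_mul_eq_mul_div, div_le_one (by positivity)]
    exact mul_le_mul_of_nonneg_right
      ((rpow_le_one hr.le hr1 (by linarith)).trans (one_le_exp (by positivity))) hμ.le
  have hbound := mul_le_div_one_add_sq_of_le_div hε0.le hμ (Meps_pos hε0.le (by linarith))
    (by positivity) hqμ (by positivity) (le_Meps hε0.le (by linarith) hs) hδ
  rw [bubbleAngle, correctionAngle, sin_two_mul_arctan, sin_two_mul_arctan,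
    ← betaFun_rpow hB hε1.ne, le_div_iff₀ (by positivity)]
  calc δ * exp (-2 * t) / betaFun ε δ β₀ t ^ (1 - ε) * (2 * s / (1 + s ^ 2)) * r ^ 2
      = 2 * δ * (exp (-2 * t) / betaFun ε δ β₀ t ^ (1 - ε) * s * r ^ 2) / (1 + s ^ 2) := by
        ring
    _ = 2 * (δ * μ * q * (s ^ (2 - ε) / (1 + s ^ 2))) := by
        rw [exp_div_rpow_mul_sq_eq hr hβ hμ.ne']
        ring
    _ ≤ 2 * (ε * q / (1 + q ^ 2)) := by gcongr
    _ = ε * (2 * q / (1 + q ^ 2)) := by ring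

theorem barrier_subsolution (hε : ε ∈ Ioo 0 1) (hμ : 0 < μ) (hr : 0 < r) (hr1 : r ≤ 1)
    (ht : 0 ≤ t) (hB : 0 < betaBase ε δ β₀ t)
    (hcos : 1 / (1 + ε) ≤ cos (correctionAngle ε μ r t))
    (hδ : δ ≤ μ * ε / (Meps ε * (μ ^ 2 + 1))) :
    deriv (fun τ => barrier ε δ β₀ μ r τ) t + r * deriv (fun s => barrier ε δ β₀ μ s t) r
      ≤ deriv (deriv fun s => barrier ε δ β₀ μ s t) r
        + deriv (fun s => barrier ε δ β₀ μ s t) r / r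
        - sin (2 * barrier ε δ β₀ μ r t) / (2 * r ^ 2) := by
  have hsin : 0 ≤ sin (correctionAngle ε μ r t) := by
    rw [correctionAngle, sin_two_mul_arctan]
    positivity
  have htrig := two_mul_sub_one_mul_sin_le (x := bubbleAngle ε δ β₀ r t)
    (by linarith [hε.1]) hsin hcos
  rw [barrier_drift_eq hr hB hε.2.ne hμ.ne', barrier_radial_laplacian_eq hr]
  calc δ * exp (-2 * t) / betaBase ε δ β₀ t * sin (bubbleAngle ε δ β₀ r t)
      ≤ ε * sin (correctionAngle ε μ r t) / r ^ 2 := barrier_drift_le hε hμ hr hr1 ht hB hδ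
    _ ≤ (sin (2 * bubbleAngle ε δ β₀ r t) + (1 + ε) ^ 2 * sin (2 * correctionAngle ε μ r t)
          - sin (2 * (bubbleAngle ε δ β₀ r t + correctionAngle ε μ r t))) / (2 * r ^ 2) := by
        rw [div_le_div_iff₀ (by positivity) (by positivity)]
        nlinarith [sq_nonneg r]
    _ = _ := by rw [barrier_eq_add]; ring

end Barrier

theorem stmt_13_general (ε μ δ β₀ : ℝ) (hε : ε ∈ Ioo (0:ℝ) 1) (hμ : 0 < μ)
    (hβ₀ : 0 < β₀)
    (hcos : ∀ r ∈ Icc (0:ℝ) 1, ∀ t : ℝ, 0 ≤ t →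
      1 / (1 + ε) ≤ Real.cos (2 * Real.arctan (r ^ (1 + ε) / (Real.exp ((1 + ε) * t) * μ))))
    (hδle : δ ≤ μ * ε / (Meps ε * (μ ^ 2 + 1))) :
    (0 < Meps ε ∧ BddAbove {y : ℝ | ∃ s : ℝ, 0 < s ∧ y = s ^ (2 - ε) / (1 + s ^ 2)}) ∧
    ∀ r ∈ Ioc (0:ℝ) 1, ∀ t ∈ Ico (0:ℝ) (blowupTime ε δ β₀),
      deriv (fun τ => barrier ε δ β₀ μ r τ) t + r * deriv (fun s => barrier ε δ β₀ μ s t) r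
        ≤ deriv (deriv (fun s => barrier ε δ β₀ μ s t)) r
          + deriv (fun s => barrier ε δ β₀ μ s t) r / r
          - Real.sin (2 * barrier ε δ β₀ μ r t) / (2 * r ^ 2) := by
  have hε2 : ε ≤ 2 := by linarith [hε.2]
  refine ⟨⟨Meps_pos hε.1.le hε2, bddAbove_Meps hε.1.le hε2⟩, ?_⟩
  rintro r ⟨hr, hr1⟩ t ⟨ht, htT⟩
  exact barrier_subsolution hε hμ hr hr1 ht (betaBase_pos hβ₀ ht htT)
    (hcos r ⟨hr.le, hr1⟩ t ht) hδle

/-- The barrier `f` is a subsolution of the drifted harmonic map heat equation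
`f_t + r f_r ≤ f_rr + f_r/r − sin(2f)/(2r²)` on `(0,1] × [0,T₀)`. Moreover
`M(ε)` is a finite positive number. -/
theorem stmt_13 (ε μ δ β₀ : ℝ) (hε : ε ∈ Ioo (0:ℝ) 1) (hμ : 0 < μ) (hδ : 0 < δ)
    (hβ₀ : 0 < β₀) (hcon : 2 * β₀ ^ (1 - ε) < δ * (1 - ε))
    (hcos : ∀ r ∈ Icc (0:ℝ) 1, ∀ t : ℝ, 0 ≤ t →
      1 / (1 + ε) ≤ Real.cos (2 * Real.arctan (r ^ (1 + ε) / (Real.exp ((1 + ε) * t) * μ))))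
    (hδle : δ ≤ μ * ε / (Meps ε * (μ ^ 2 + 1))) :
    (0 < Meps ε ∧ BddAbove {y : ℝ | ∃ s : ℝ, 0 < s ∧ y = s ^ (2 - ε) / (1 + s ^ 2)}) ∧
    ∀ r ∈ Ioc (0:ℝ) 1, ∀ t ∈ Ico (0:ℝ) (blowupTime ε δ β₀),
      deriv (fun τ => barrier ε δ β₀ μ r τ) t + r * deriv (fun s => barrier ε δ β₀ μ s t) r
        ≤ deriv (deriv (fun s => barrier ε δ β₀ μ s t)) r
          + deriv (fun s => barrier ε δ β₀ μ s t) r / r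
          - Real.sin (2 * barrier ε δ β₀ μ r t) / (2 * r ^ 2) :=
  stmt_13_general ε μ δ β₀ hε hμ hβ₀ hcos hδle

end
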